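/- arXiv:2205.03570 — 2 statements merged into one kernel-verified Lean document; each statement's English description precedes it below -/
import Mathlib

section
/- Let (x, s) ∈ int(K) × int(K) satisfy max over all blocks i and j ∈ {1,2} of |λ_i^j(w_{xs}) − ν̇| ≤ γ ν̇ for some scalars γ > 0 and ν̇ > 0. Then, in the operator 2-norm: ‖R_{xs} − W_{xs}‖ ≤ 2γν̇, ‖W_{xs} − ν̇ I‖ ≤ γν̇, and ‖R_{xs} − ν̇ I‖ ≤ 3γν̇. -/
open scoped BigOperators
open Matrix

namespace SOCP

/-- Index type for a block vector with `k` blocks, block `i` having dimension `d i + 1`. -/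
abbrev Idx {k : ℕ} (d : Fin k → ℕ) : Type := (i : Fin k) × Fin (d i + 1)

/-- The `i`-th block of a block vector. -/
def blk {k : ℕ} {d : Fin k → ℕ} (v : Idx d → ℝ) (i : Fin k) : Fin (d i + 1) → ℝ :=
  fun j => v ⟨i, j⟩

/-- Squared Euclidean norm of the tail `u_{2:m}` of a single block. -/
def tailNormSq {m : ℕ} (u : Fin (m + 1) → ℝ) : ℝ := ∑ j : Fin m, u j.succ ^ 2

/-- Euclidean norm of the tail `u_{2:m}` of a single block. -/
noncomputable def tailNorm {m : ℕ} (u : Fin (m + 1) → ℝ) : ℝ := Real.sqrt (tailNormSq u)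

/-- Membership in the cone `K` (a direct product of second-order cones). -/
def inK {k : ℕ} {d : Fin k → ℕ} (v : Idx d → ℝ) : Prop :=
  ∀ i : Fin k, tailNorm (blk v i) ≤ v ⟨i, 0⟩

/-- Membership in the interior of the cone `K`. -/
def inIntK {k : ℕ} {d : Fin k → ℕ} (v : Idx d → ℝ) : Prop :=
  ∀ i : Fin k, tailNorm (blk v i) < v ⟨i, 0⟩

/-- Euclidean inner product of vectors. -/
def dotV {ι : Type*} [Fintype ι] (u v : ι → ℝ) : ℝ := ∑ a, u a * v a

/-- Euclidean norm of a vector. -/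
noncomputable def vnorm {ι : Type*} [Fintype ι] (v : ι → ℝ) : ℝ :=
  Real.sqrt (∑ a, v a ^ 2)

/-- Blockwise Jordan product. -/
def jmul {k : ℕ} {d : Fin k → ℕ} (u v : Idx d → ℝ) : Idx d → ℝ := fun a =>
  if a.2 = 0 then ∑ j, u ⟨a.1, j⟩ * v ⟨a.1, j⟩
  else u ⟨a.1, 0⟩ * v a + v ⟨a.1, 0⟩ * u a

/-- The unit element `e` of the Jordan algebra. -/
def unitE {k : ℕ} {d : Fin k → ℕ} : Idx d → ℝ := fun a => if a.2 = 0 then 1 else 0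

/-- `λ_min` of the `i`-th block. -/
noncomputable def lamMin {k : ℕ} {d : Fin k → ℕ} (v : Idx d → ℝ) (i : Fin k) : ℝ :=
  v ⟨i, 0⟩ - tailNorm (blk v i)

/-- `λ_max` of the `i`-th block. -/
noncomputable def lamMax {k : ℕ} {d : Fin k → ℕ} (v : Idx d → ℝ) (i : Fin k) : ℝ :=
  v ⟨i, 0⟩ + tailNorm (blk v i)

/-- Arrow-head matrix of a single block. -/
def arrowBlk {m : ℕ} (u : Fin (m + 1) → ℝ) : Matrix (Fin (m + 1)) (Fin (m + 1)) ℝ :=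
  Matrix.of fun j j' =>
    if j = 0 then u j' else if j' = 0 then u j else if j = j' then u 0 else 0

/-- Arrow-head matrix `mat(v)` (block diagonal). -/
def matV {k : ℕ} {d : Fin k → ℕ} (v : Idx d → ℝ) : Matrix (Idx d) (Idx d) ℝ :=
  Matrix.blockDiagonal' fun i => arrowBlk (blk v i)

/-- `β_u = sqrt(u_1^2 - ‖u_{2:m}‖^2)` for a single block. -/
noncomputable def betaOf {m : ℕ} (u : Fin (m + 1) → ℝ) : ℝ :=
  Real.sqrt (u 0 ^ 2 - tailNormSq u)

/-- The matrix `T_u` for a single block. -/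
noncomputable def Tblk {m : ℕ} (u : Fin (m + 1) → ℝ) :
    Matrix (Fin (m + 1)) (Fin (m + 1)) ℝ :=
  Matrix.of fun j j' =>
    if j = 0 then u j'
    else if j' = 0 then u j
    else (if j = j' then betaOf u else 0) + u j * u j' / (betaOf u + u 0)

/-- The matrix `T_x` (block diagonal). -/
noncomputable def TV {k : ℕ} {d : Fin k → ℕ} (x : Idx d → ℝ) :
    Matrix (Idx d) (Idx d) ℝ :=
  Matrix.blockDiagonal' fun i => Tblk (blk x i)

/-- `w_{xs} = T_x s`. -/
noncomputable def wxs {k : ℕ} {d : Fin k → ℕ} (x s : Idx d → ℝ) : Idx d → ℝ :=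
  (TV x).mulVec s

/-- Central-path coefficient `μ(x,s) = xᵀs/k`. -/
noncomputable def muV {k : ℕ} {d : Fin k → ℕ} (x s : Idx d → ℝ) : ℝ :=
  dotV x s / (k : ℝ)

/-- Central-path distance `d_2(x,s) = √2 ‖w_{xs} - μ e‖`. -/
noncomputable def d2 {k : ℕ} {d : Fin k → ℕ} (x s : Idx d → ℝ) : ℝ :=
  Real.sqrt 2 * vnorm (wxs x s - muV x s • unitE)

/-- Central-path distance `d_∞(x,s)`. -/
noncomputable def dInf {k : ℕ} {d : Fin k → ℕ} (x s : Idx d → ℝ) : ℝ :=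
  ⨆ i : Fin k, max |lamMax (wxs x s) i - muV x s| |lamMin (wxs x s) i - muV x s|

/-- The matrix `Q = diag(1, -I)` for a single block. -/
def Qblk {m : ℕ} : Matrix (Fin (m + 1)) (Fin (m + 1)) ℝ :=
  Matrix.of fun j j' => if j = j' then (if j = 0 then (1 : ℝ) else -1) else 0

/-- The scaling group `G` of block matrices `Θ G` with `(Gⁱ)ᵀ Qⁱ Gⁱ = Qⁱ`. -/
def scalingGroup {k : ℕ} (d : Fin k → ℕ) : Set (Matrix (Idx d) (Idx d) ℝ) :=
  { D | ∃ (θ : Fin k → ℝ) (G : ∀ i, Matrix (Fin (d i + 1)) (Fin (d i + 1)) ℝ),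
      (∀ i, 0 < θ i) ∧ (∀ i, (G i)ᵀ * Qblk * G i = Qblk) ∧
      D = Matrix.blockDiagonal' fun i => θ i • G i }

/-- Operator 2-norm of a matrix. -/
noncomputable def op2 {m n : Type*} [Fintype m] [Fintype n] [DecidableEq n]
    (M : Matrix m n ℝ) : ℝ :=
  ‖LinearMap.toContinuousLinearMap (Matrix.toEuclideanLin M)‖

/-- `R_{xs} = T_x X⁻¹ S T_x`. -/
noncomputable def Rxs {k : ℕ} {d : Fin k → ℕ} (x s : Idx d → ℝ) :
    Matrix (Idx d) (Idx d) ℝ :=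
  TV x * (matV x)⁻¹ * matV s * TV x

/-- The scaled Newton system of the infeasible IPM (Monteiro–Zhang family). -/
def NewtonSys {k p : ℕ} {d : Fin k → ℕ} (A : Matrix (Fin p) (Idx d) ℝ)
    (Cm : Matrix (Idx d) (Idx d) ℝ) (x : Idx d → ℝ) (y : Fin p → ℝ) (s : Idx d → ℝ)
    (ν : ℝ) (D : Matrix (Idx d) (Idx d) ℝ)
    (dx : Idx d → ℝ) (dy : Fin p → ℝ) (ds : Idx d → ℝ) : Prop :=
  A.mulVec dx = -((1 - ν) • A.mulVec x) ∧
  Aᵀ.mulVec dy + Cm.mulVec dx + ds =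
    -((1 - ν) • (Aᵀ.mulVec y + Cm.mulVec x + s)) ∧
  (matV ((D⁻¹)ᵀ.mulVec x)).mulVec (D.mulVec ds)
      + (matV (D.mulVec s)).mulVec ((D⁻¹)ᵀ.mulVec dx)
    = (ν * muV x s) • unitE - jmul ((D⁻¹)ᵀ.mulVec x) (D.mulVec s)

/-- Central-path neighborhood `N_2(γ)`. -/
def N2 {k : ℕ} (d : Fin k → ℕ) (p : ℕ) (γ : ℝ) :
    Set ((Idx d → ℝ) × (Fin p → ℝ) × (Idx d → ℝ)) :=
  { z | inIntK z.1 ∧ inIntK z.2.2 ∧ d2 z.1 z.2.2 ≤ γ * muV z.1 z.2.2 }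

/-- Central-path neighborhood `N_∞(γ)`. -/
def NInf {k : ℕ} (d : Fin k → ℕ) (p : ℕ) (γ : ℝ) :
    Set ((Idx d → ℝ) × (Fin p → ℝ) × (Idx d → ℝ)) :=
  { z | inIntK z.1 ∧ inIntK z.2.2 ∧ dInf z.1 z.2.2 ≤ γ * muV z.1 z.2.2 }

/-- The matrix `U_u` for a single block: zero first row and column and lower-right block
`(u_1 - β_u) P_u`, with `P_u` the projection onto the complement of the tail of `u`
(zero when the tail vanishes). -/
noncomputable def Ublk {m : ℕ} (u : Fin (m + 1) → ℝ) :
    Matrix (Fin (m + 1)) (Fin (m + 1)) ℝ :=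
  Matrix.of fun j j' =>
    if j = 0 ∨ j' = 0 then 0
    else if tailNormSq u = 0 then 0
    else (u 0 - betaOf u) * ((if j = j' then (1 : ℝ) else 0) - u j * u j' / tailNormSq u)

/-- The block-diagonal matrix `U_x`. -/
noncomputable def UV {k : ℕ} {d : Fin k → ℕ} (x : Idx d → ℝ) :
    Matrix (Idx d) (Idx d) ℝ :=
  Matrix.blockDiagonal' fun i => Ublk (blk x i)

/-- `Γ_p = 2 (γ²/2 + (1-ν)² k)^{1/2} / (1 - 3γ)`. -/
noncomputable def GammaP (γ ν : ℝ) (k : ℕ) : ℝ :=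
  2 * Real.sqrt (γ ^ 2 / 2 + (1 - ν) ^ 2 * k) / (1 - 3 * γ)

/-- `Γ̃ = (4(γ² + δ²)/(1-3γ)²) (1 - δ/√(2k))⁻¹`. -/
noncomputable def GammaTilde (γ δ : ℝ) (k : ℕ) : ℝ :=
  4 * (γ ^ 2 + δ ^ 2) / (1 - 3 * γ) ^ 2 * (1 - δ / Real.sqrt (2 * k))⁻¹

/-!
Everything splits along the blocks of `K`. On a block, with `u = x⁽ⁱ⁾`, `w = T_u s⁽ⁱ⁾` and bars
denoting tails, a direct computation gives
`(T_u mat(u)⁻¹ mat(s⁽ⁱ⁾) T_u - mat(w)) v = (0, (⟨ū, v̄⟩ w̄ - ⟨ū, w̄⟩ v̄) / u₁)`,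
whose norm is at most `2 ‖ū‖ ‖v̄‖ ‖w̄‖ / u₁ ≤ 2 ‖w̄‖ ‖v‖`. Next, `mat(w) - ν̇ I = mat(w - ν̇ e)` has
norm at most `|w₁ - ν̇| + ‖w̄‖ = max_j |λ_j(w) - ν̇| ≤ γ ν̇`. A block-diagonal matrix has operator
norm at most the largest norm of its blocks, and the third bound is the triangle inequality.
-/

open scoped RealInnerProductSpace

lemma norm_inner_smul_sub_inner_smul_le {E : Type*} [NormedAddCommGroup E]
    [InnerProductSpace ℝ E] (u v w : E) :
    ‖⟪u, v⟫ • w - ⟪u, w⟫ • v‖ ≤ 2 * ‖u‖ * ‖v‖ * ‖w‖ := by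
  calc ‖⟪u, v⟫ • w - ⟪u, w⟫ • v‖ ≤ |⟪u, v⟫| * ‖w‖ + |⟪u, w⟫| * ‖v‖ := by
        simpa [norm_smul] using norm_sub_le (⟪u, v⟫ • w) (⟪u, w⟫ • v)
    _ ≤ ‖u‖ * ‖v‖ * ‖w‖ + ‖u‖ * ‖w‖ * ‖v‖ := by
        gcongr <;> exact abs_real_inner_le_norm _ _
    _ = 2 * ‖u‖ * ‖v‖ * ‖w‖ := by ring

section OperatorNorm

variable {m n : Type*} [Fintype m] [Fintype n] [DecidableEq n]

lemma norm_toLp_mulVec_le_op2 (M : Matrix m n ℝ) (v : n → ℝ) :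
    ‖WithLp.toLp 2 (M *ᵥ v)‖ ≤ op2 M * ‖WithLp.toLp 2 v‖ :=
  (LinearMap.toContinuousLinearMap (Matrix.toEuclideanLin M)).le_opNorm (WithLp.toLp 2 v)

lemma op2_le_of_norm_mulVec_le {M : Matrix m n ℝ} {c : ℝ} (hc : 0 ≤ c)
    (h : ∀ v : n → ℝ, ‖WithLp.toLp 2 (M *ᵥ v)‖ ≤ c * ‖WithLp.toLp 2 v‖) : op2 M ≤ c :=
  ContinuousLinearMap.opNorm_le_bound _ hc fun v => h v.ofLp

lemma op2_add_le (A B : Matrix m n ℝ) : op2 (A + B) ≤ op2 A + op2 B := by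
  simp only [op2, map_add]
  exact norm_add_le _ _

end OperatorNorm

section BlockDiagonal

variable {ι : Type*} [Fintype ι] {m n : ι → Type*} [∀ i, Fintype (n i)]

lemma norm_toLp_sq_sigma (v : (Σ i, n i) → ℝ) :
    ‖WithLp.toLp 2 v‖ ^ 2 = ∑ i, ‖WithLp.toLp 2 (fun j => v ⟨i, j⟩)‖ ^ 2 := by
  simp [EuclideanSpace.real_norm_sq_eq, Fintype.sum_sigma]

variable [DecidableEq ι]

lemma blockDiagonal'_mulVec_apply (M : ∀ i, Matrix (m i) (n i) ℝ) (v : (Σ i, n i) → ℝ)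
    (a : Σ i, m i) :
    (Matrix.blockDiagonal' M *ᵥ v) a = (M a.1 *ᵥ fun j => v ⟨a.1, j⟩) a.2 := by
  obtain ⟨i, j⟩ := a
  simp only [Matrix.mulVec, dotProduct, Fintype.sum_sigma]
  rw [Finset.sum_eq_single i]
  · simp [Matrix.blockDiagonal'_apply_eq]
  · intro i' _ hne
    simp [Matrix.blockDiagonal'_apply_ne _ _ _ (Ne.symm hne)]
  · simp

lemma op2_blockDiagonal'_le [∀ i, Fintype (m i)] [∀ i, DecidableEq (n i)]
    (M : ∀ i, Matrix (m i) (n i) ℝ) {c : ℝ} (hc : 0 ≤ c) (hM : ∀ i, op2 (M i) ≤ c) :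
    op2 (Matrix.blockDiagonal' M) ≤ c := by
  refine op2_le_of_norm_mulVec_le hc fun v => ?_
  rw [← pow_le_pow_iff_left₀ (norm_nonneg _) (by positivity) two_ne_zero, mul_pow,
    norm_toLp_sq_sigma, norm_toLp_sq_sigma, Finset.mul_sum]
  refine Finset.sum_le_sum fun i _ => ?_
  simp only [blockDiagonal'_mulVec_apply]
  rw [← mul_pow]
  exact pow_le_pow_left₀ (norm_nonneg _) ((norm_toLp_mulVec_le_op2 _ _).trans
    (mul_le_mul_of_nonneg_right (hM i) (norm_nonneg _))) 2

end BlockDiagonal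

section Block

variable {m : ℕ}

-- The tail lives in `EuclideanSpace` (not in `Fin m → ℝ`, whose norm is the sup norm).
def tailVec (u : Fin (m + 1) → ℝ) : EuclideanSpace ℝ (Fin m) := WithLp.toLp 2 (Fin.tail u)

def consVec (a : ℝ) (t : EuclideanSpace ℝ (Fin m)) : Fin (m + 1) → ℝ := Fin.cons a t.ofLp

@[simp] lemma consVec_zero (a : ℝ) (t : EuclideanSpace ℝ (Fin m)) : consVec a t 0 = a := rfl

@[simp] lemma tailVec_consVec (a : ℝ) (t : EuclideanSpace ℝ (Fin m)) :
    tailVec (consVec a t) = t := rfl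

lemma consVec_zero_tailVec (u : Fin (m + 1) → ℝ) : consVec (u 0) (tailVec u) = u :=
  Fin.cons_self_tail u

lemma consVec_add (a b : ℝ) (s t : EuclideanSpace ℝ (Fin m)) :
    consVec a s + consVec b t = consVec (a + b) (s + t) := by
  ext j
  refine Fin.cases ?_ (fun j => ?_) j <;> simp [consVec]

lemma tailNorm_eq_norm (u : Fin (m + 1) → ℝ) : tailNorm u = ‖tailVec u‖ := by
  rw [EuclideanSpace.norm_eq, tailNorm, tailNormSq]
  simp [tailVec, Fin.tail]

lemma norm_toLp_sq (u : Fin (m + 1) → ℝ) :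
    ‖WithLp.toLp 2 u‖ ^ 2 = u 0 ^ 2 + ‖tailVec u‖ ^ 2 := by
  simp [EuclideanSpace.real_norm_sq_eq, Fin.sum_univ_succ, tailVec, Fin.tail]

lemma norm_tailVec_le (v : Fin (m + 1) → ℝ) : ‖tailVec v‖ ≤ ‖WithLp.toLp 2 v‖ :=
  le_of_sq_le_sq (by nlinarith [norm_toLp_sq v, sq_nonneg (v 0)]) (norm_nonneg _)

lemma norm_toLp_consVec_zero (t : EuclideanSpace ℝ (Fin m)) :
    ‖WithLp.toLp 2 (consVec 0 t)‖ = ‖t‖ := by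
  have h := norm_toLp_sq (consVec 0 t)
  simp only [consVec_zero, tailVec_consVec] at h
  exact (sq_eq_sq₀ (norm_nonneg _) (norm_nonneg _)).1 (by simpa using h)

lemma inner_tailVec (u v : Fin (m + 1) → ℝ) :
    ⟪tailVec u, tailVec v⟫ = ∑ j : Fin m, u j.succ * v j.succ := by
  simp [tailVec, EuclideanSpace.inner_toLp_toLp, dotProduct, Fin.tail, mul_comm]

lemma pos_of_tailNorm_lt {u : Fin (m + 1) → ℝ} (h : tailNorm u < u 0) : 0 < u 0 :=
  (Real.sqrt_nonneg _).trans_lt h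

lemma betaOf_pos {u : Fin (m + 1) → ℝ} (h : tailNorm u < u 0) : 0 < betaOf u := by
  rw [tailNorm_eq_norm] at h
  rw [betaOf, tailNormSq, ← Real.sq_sqrt (Finset.sum_nonneg fun _ _ => sq_nonneg _),
    ← tailNormSq, ← tailNorm, tailNorm_eq_norm, Real.sqrt_pos]
  nlinarith [norm_nonneg (tailVec u)]

lemma norm_tailVec_sq {u : Fin (m + 1) → ℝ} (h : tailNorm u < u 0) :
    ‖tailVec u‖ ^ 2 = u 0 ^ 2 - betaOf u ^ 2 := by
  rw [tailNorm_eq_norm] at h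
  rw [betaOf, tailNormSq, ← Real.sq_sqrt (Finset.sum_nonneg fun _ _ => sq_nonneg _),
    ← tailNormSq, ← tailNorm, tailNorm_eq_norm, Real.sq_sqrt]
  · ring
  · nlinarith [norm_nonneg (tailVec u)]

lemma arrowBlk_mulVec (u v : Fin (m + 1) → ℝ) :
    arrowBlk u *ᵥ v =
      consVec (u 0 * v 0 + ⟪tailVec u, tailVec v⟫) (v 0 • tailVec u + u 0 • tailVec v) := by
  ext j
  refine Fin.cases ?_ (fun j => ?_) j
  · simp [Matrix.mulVec, dotProduct, arrowBlk, Fin.sum_univ_succ, inner_tailVec]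
  · simp [Matrix.mulVec, dotProduct, arrowBlk, Fin.sum_univ_succ, consVec, tailVec, Fin.tail,
      Fin.succ_ne_zero, mul_comm]

lemma Tblk_mulVec (u v : Fin (m + 1) → ℝ) :
    Tblk u *ᵥ v =
      consVec (u 0 * v 0 + ⟪tailVec u, tailVec v⟫)
        (v 0 • tailVec u + betaOf u • tailVec v
          + (⟪tailVec u, tailVec v⟫ / (betaOf u + u 0)) • tailVec u) := by
  ext j
  refine Fin.cases ?_ (fun j => ?_) j
  · simp [Matrix.mulVec, dotProduct, Tblk, Fin.sum_univ_succ, inner_tailVec]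
  · simp [Matrix.mulVec, dotProduct, Tblk, Fin.sum_univ_succ, consVec, tailVec, Fin.tail,
      Fin.succ_ne_zero, add_mul, ite_mul, Finset.sum_add_distrib]
    rw [← tailVec, ← tailVec, inner_tailVec, Finset.sum_div, Finset.sum_mul,
      Finset.sum_congr rfl fun i _ => show u j.succ * u i.succ / (betaOf u + u 0) * v i.succ
        = u i.succ * v i.succ / (betaOf u + u 0) * u j.succ by ring]
    ring

lemma arrowBlk_sub_smul_one (u : Fin (m + 1) → ℝ) (c : ℝ) :
    arrowBlk u - c • (1 : Matrix (Fin (m + 1)) (Fin (m + 1)) ℝ) =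
      arrowBlk (consVec (u 0 - c) (tailVec u)) := by
  ext j j'
  refine Fin.cases ?_ (fun j => ?_) j <;> refine Fin.cases ?_ (fun j' => ?_) j' <;>
    simp [arrowBlk, consVec, tailVec, Fin.tail, Matrix.one_apply, Fin.succ_ne_zero,
      (Fin.succ_ne_zero _).symm]
  split_ifs <;> ring

noncomputable def arrowInv (u y : Fin (m + 1) → ℝ) : Fin (m + 1) → ℝ :=
  consVec ((u 0 * y 0 - ⟪tailVec u, tailVec y⟫) / betaOf u ^ 2)
    ((u 0)⁻¹ • tailVec y
      + ((⟪tailVec u, tailVec y⟫ - u 0 * y 0) / (u 0 * betaOf u ^ 2)) • tailVec u)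

lemma arrowBlk_mulVec_arrowInv {u : Fin (m + 1) → ℝ} (h : tailNorm u < u 0)
    (y : Fin (m + 1) → ℝ) : arrowBlk u *ᵥ arrowInv u y = y := by
  have hu := pos_of_tailNorm_lt h
  have hβ := betaOf_pos h
  conv_rhs => rw [← consVec_zero_tailVec y]
  rw [arrowInv, arrowBlk_mulVec]
  simp only [consVec_zero, tailVec_consVec, inner_add_right, inner_smul_right,
    real_inner_self_eq_norm_sq, norm_tailVec_sq h]
  congr 1
  · field_simp
    ring
  · match_scalars
    · field_simp
      ring
    · field_simp

lemma isUnit_arrowBlk {u : Fin (m + 1) → ℝ} (h : tailNorm u < u 0) : IsUnit (arrowBlk u) :=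
  Matrix.mulVec_surjective_iff_isUnit.1 fun y => ⟨_, arrowBlk_mulVec_arrowInv h y⟩

lemma arrowBlk_inv_mulVec {u : Fin (m + 1) → ℝ} (h : tailNorm u < u 0)
    (y : Fin (m + 1) → ℝ) : (arrowBlk u)⁻¹ *ᵥ y = arrowInv u y := by
  conv_lhs => rw [← arrowBlk_mulVec_arrowInv h y]
  rw [Matrix.mulVec_mulVec,
    Matrix.nonsing_inv_mul _ ((Matrix.isUnit_iff_isUnit_det _).1 (isUnit_arrowBlk h)),
    Matrix.one_mulVec]

lemma Tblk_mul_inv_mul_arrowBlk_mul_Tblk_mulVec {u : Fin (m + 1) → ℝ} (h : tailNorm u < u 0)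
    (p v : Fin (m + 1) → ℝ) :
    (Tblk u * (arrowBlk u)⁻¹ * arrowBlk p * Tblk u) *ᵥ v =
      arrowBlk (Tblk u *ᵥ p) *ᵥ v
        + consVec 0 ((u 0)⁻¹ • (⟪tailVec u, tailVec v⟫ • tailVec (Tblk u *ᵥ p)
            - ⟪tailVec u, tailVec (Tblk u *ᵥ p)⟫ • tailVec v)) := by
  have hu := pos_of_tailNorm_lt h
  have hβ := betaOf_pos h
  simp only [← Matrix.mulVec_mulVec]
  rw [arrowBlk_inv_mulVec h, arrowInv, Tblk_mulVec u v, arrowBlk_mulVec, Tblk_mulVec,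
    arrowBlk_mulVec, Tblk_mulVec, consVec_add]
  simp only [consVec_zero, tailVec_consVec, inner_add_right, inner_smul_right, inner_add_left,
    inner_smul_left, real_inner_self_eq_norm_sq, RCLike.conj_to_real,
    real_inner_comm (tailVec u) (tailVec p), norm_tailVec_sq h]
  congr 1
  · field_simp
    ring
  · match_scalars <;> field_simp <;> ring

lemma norm_arrowBlk_mulVec_le (u v : Fin (m + 1) → ℝ) :
    ‖WithLp.toLp 2 (arrowBlk u *ᵥ v)‖ ≤ (|u 0| + ‖tailVec u‖) * ‖WithLp.toLp 2 v‖ := by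
  have hhead : |u 0 * v 0 + ⟪tailVec u, tailVec v⟫|
      ≤ |u 0| * |v 0| + ‖tailVec u‖ * ‖tailVec v‖ :=
    (abs_add_le _ _).trans (by rw [abs_mul]; gcongr; exact abs_real_inner_le_norm _ _)
  have htail : ‖v 0 • tailVec u + u 0 • tailVec v‖
      ≤ |v 0| * ‖tailVec u‖ + |u 0| * ‖tailVec v‖ :=
    (norm_add_le _ _).trans (by simp [norm_smul])
  rw [← pow_le_pow_iff_left₀ (norm_nonneg _) (by positivity) two_ne_zero, arrowBlk_mulVec,
    norm_toLp_sq, mul_pow, norm_toLp_sq]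
  simp only [consVec_zero, tailVec_consVec]
  have h1 := sq_le_sq' (abs_le.1 hhead).1 (abs_le.1 hhead).2
  have h2 := pow_le_pow_left₀ (norm_nonneg _) htail 2
  nlinarith [mul_nonneg (mul_nonneg (abs_nonneg (u 0)) (norm_nonneg (tailVec u)))
    (sq_nonneg (|v 0| - ‖tailVec v‖)), sq_abs (v 0), sq_abs (u 0)]

lemma op2_arrowBlk_sub_smul_one_le (u : Fin (m + 1) → ℝ) (c : ℝ) :
    op2 (arrowBlk u - c • 1) ≤ |u 0 - c| + tailNorm u := by
  rw [arrowBlk_sub_smul_one, tailNorm_eq_norm]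
  refine op2_le_of_norm_mulVec_le (by positivity) fun v => ?_
  simpa using norm_arrowBlk_mulVec_le (consVec (u 0 - c) (tailVec u)) v

lemma op2_Tblk_mul_inv_mul_arrowBlk_mul_Tblk_sub_le {u : Fin (m + 1) → ℝ}
    (h : tailNorm u < u 0) (p : Fin (m + 1) → ℝ) :
    op2 (Tblk u * (arrowBlk u)⁻¹ * arrowBlk p * Tblk u - arrowBlk (Tblk u *ᵥ p)) ≤
      2 * tailNorm (Tblk u *ᵥ p) := by
  have hu := pos_of_tailNorm_lt h
  have hū : ‖tailVec u‖ ≤ u 0 := tailNorm_eq_norm u ▸ h.le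
  rw [tailNorm_eq_norm]
  refine op2_le_of_norm_mulVec_le (by positivity) fun v => ?_
  rw [Matrix.sub_mulVec, Tblk_mul_inv_mul_arrowBlk_mul_Tblk_mulVec h, add_sub_cancel_left,
    norm_toLp_consVec_zero, norm_smul, norm_inv, Real.norm_of_nonneg hu.le, inv_mul_le_iff₀ hu]
  calc _ ≤ 2 * ‖tailVec u‖ * ‖tailVec v‖ * ‖tailVec (Tblk u *ᵥ p)‖ :=
        norm_inner_smul_sub_inner_smul_le _ _ _
    _ ≤ 2 * u 0 * ‖WithLp.toLp 2 v‖ * ‖tailVec (Tblk u *ᵥ p)‖ := by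
        gcongr
        exact norm_tailVec_le v
    _ = u 0 * (2 * ‖tailVec (Tblk u *ᵥ p)‖ * ‖WithLp.toLp 2 v‖) := by ring

end Block
section Cone

variable {k : ℕ} {d : Fin k → ℕ}

lemma blk_blockDiagonal'_mulVec (M : ∀ i, Matrix (Fin (d i + 1)) (Fin (d i + 1)) ℝ)
    (v : Idx d → ℝ) (i : Fin k) :
    blk (Matrix.blockDiagonal' M *ᵥ v) i = M i *ᵥ blk v i :=
  funext fun j => blockDiagonal'_mulVec_apply M v ⟨i, j⟩

lemma blk_wxs (x s : Idx d → ℝ) (i : Fin k) : blk (wxs x s) i = Tblk (blk x i) *ᵥ blk s i :=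
  blk_blockDiagonal'_mulVec _ s i

lemma matV_wxs (x s : Idx d → ℝ) :
    matV (wxs x s) = Matrix.blockDiagonal' fun i => arrowBlk (Tblk (blk x i) *ᵥ blk s i) := by
  simp only [matV, blk_wxs]

lemma inv_matV {x : Idx d → ℝ} (hx : inIntK x) :
    (matV x)⁻¹ = Matrix.blockDiagonal' fun i => (arrowBlk (blk x i))⁻¹ := by
  refine Matrix.inv_eq_right_inv ?_
  rw [matV, ← Matrix.blockDiagonal'_mul, ← Matrix.blockDiagonal'_one]
  congr 1
  funext i
  exact Matrix.mul_nonsing_inv _ ((Matrix.isUnit_iff_isUnit_det _).1 (isUnit_arrowBlk (hx i)))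

lemma Rxs_sub_matV_wxs {x : Idx d → ℝ} (hx : inIntK x) (s : Idx d → ℝ) :
    Rxs x s - matV (wxs x s) = Matrix.blockDiagonal' fun i =>
      Tblk (blk x i) * (arrowBlk (blk x i))⁻¹ * arrowBlk (blk s i) * Tblk (blk x i)
        - arrowBlk (Tblk (blk x i) *ᵥ blk s i) := by
  rw [Rxs, inv_matV hx, matV_wxs, TV, matV, ← Matrix.blockDiagonal'_mul,
    ← Matrix.blockDiagonal'_mul, ← Matrix.blockDiagonal'_mul, ← Matrix.blockDiagonal'_sub]
  rfl

lemma matV_sub_smul_one (v : Idx d → ℝ) (c : ℝ) :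
    matV v - c • (1 : Matrix (Idx d) (Idx d) ℝ) =
      Matrix.blockDiagonal' fun i => arrowBlk (blk v i) - c • 1 := by
  rw [matV, ← Matrix.blockDiagonal'_one, ← Matrix.blockDiagonal'_smul,
    ← Matrix.blockDiagonal'_sub]
  rfl

lemma abs_sub_add_tailNorm_le {v : Idx d → ℝ} {i : Fin k} {c r : ℝ}
    (hmin : |lamMin v i - c| ≤ r) (hmax : |lamMax v i - c| ≤ r) :
    |v ⟨i, 0⟩ - c| + tailNorm (blk v i) ≤ r := by
  obtain ⟨hmin₁, -⟩ := abs_le.1 hmin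
  obtain ⟨-, hmax₂⟩ := abs_le.1 hmax
  rw [lamMin] at hmin₁
  rw [lamMax] at hmax₂
  rcases abs_cases (v ⟨i, 0⟩ - c) with ⟨habs, -⟩ | ⟨habs, -⟩ <;> linarith

end Cone

theorem Rxs_Wxs_bounds_general {k : ℕ} {d : Fin k → ℕ}
    (x s : Idx d → ℝ) (hx : inIntK x)
    (γ ν' : ℝ) (hγ : 0 < γ) (hν : 0 < ν')
    (hcond : ∀ i : Fin k, |lamMin (wxs x s) i - ν'| ≤ γ * ν' ∧
      |lamMax (wxs x s) i - ν'| ≤ γ * ν') :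
    op2 (Rxs x s - matV (wxs x s)) ≤ 2 * γ * ν' ∧
    op2 (matV (wxs x s) - ν' • (1 : Matrix (Idx d) (Idx d) ℝ)) ≤ γ * ν' ∧
    op2 (Rxs x s - ν' • (1 : Matrix (Idx d) (Idx d) ℝ)) ≤ 3 * γ * ν' := by
  have hγν : 0 ≤ γ * ν' := by positivity
  have hw : ∀ i, |wxs x s ⟨i, 0⟩ - ν'| + tailNorm (blk (wxs x s) i) ≤ γ * ν' :=
    fun i => abs_sub_add_tailNorm_le (hcond i).1 (hcond i).2
  have hRW : op2 (Rxs x s - matV (wxs x s)) ≤ 2 * γ * ν' := by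
    rw [Rxs_sub_matV_wxs hx]
    refine op2_blockDiagonal'_le _ (by positivity) fun i => ?_
    refine (op2_Tblk_mul_inv_mul_arrowBlk_mul_Tblk_sub_le (hx i) _).trans ?_
    rw [← blk_wxs]
    linarith [hw i, abs_nonneg (wxs x s ⟨i, 0⟩ - ν')]
  have hWν : op2 (matV (wxs x s) - ν' • (1 : Matrix (Idx d) (Idx d) ℝ)) ≤ γ * ν' := by
    rw [matV_sub_smul_one]
    exact op2_blockDiagonal'_le _ hγν fun i => (op2_arrowBlk_sub_smul_one_le _ _).trans (hw i)
  refine ⟨hRW, hWν, ?_⟩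
  calc op2 (Rxs x s - ν' • (1 : Matrix (Idx d) (Idx d) ℝ))
      = op2 ((Rxs x s - matV (wxs x s)) + (matV (wxs x s) - ν' • 1)) := by
        rw [sub_add_sub_cancel]
    _ ≤ op2 (Rxs x s - matV (wxs x s)) + op2 (matV (wxs x s) - ν' • 1) := op2_add_le _ _
    _ ≤ 3 * γ * ν' := by linarith

/-- Lemma 3: bounds on `R_{xs}` and `W_{xs}` in the operator 2-norm. -/
theorem Rxs_Wxs_bounds {k : ℕ} {d : Fin k → ℕ}
    (x s : Idx d → ℝ) (hx : inIntK x) (hs : inIntK s)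
    (γ ν' : ℝ) (hγ : 0 < γ) (hν : 0 < ν')
    (hcond : ∀ i : Fin k, |lamMin (wxs x s) i - ν'| ≤ γ * ν' ∧
      |lamMax (wxs x s) i - ν'| ≤ γ * ν') :
    op2 (Rxs x s - matV (wxs x s)) ≤ 2 * γ * ν' ∧
    op2 (matV (wxs x s) - ν' • (1 : Matrix (Idx d) (Idx d) ℝ)) ≤ γ * ν' ∧
    op2 (Rxs x s - ν' • (1 : Matrix (Idx d) (Idx d) ℝ)) ≤ 3 * γ * ν' :=
  Rxs_Wxs_bounds_general x s hx γ ν' hγ hν hcond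

end SOCP
end

section
/- Let (x, s) ∈ int(K) × int(K) satisfy ‖R_{xs} − ν̇ I‖ ≤ τ̇ ν̇ (operator 2-norm) for some scalars τ̇ ∈ (0,1) and ν̇ > 0. Suppose u, v, h ∈ ℝ^n satisfy S u + X v = h and uᵀv ≥ 0, and define δ_u = ‖T_x^{−1} u‖ and δ_v = ‖T_x v‖. Then δ_u ≤ ‖T_x X^{−1} h‖ / ((1 − τ̇) ν̇) and δ_v ≤ 2 ‖T_x X^{−1} h‖ / (1 − τ̇). -/
open scoped BigOperators
open Matrix

/-!
Put `u' = T_x⁻¹ u`, `v' = T_x v` and `h̃ = T_x X⁻¹ h`. Then `h̃ = R_{xs} u' + v'`, and since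
`T_x` is symmetric, `u'ᵀv' = uᵀv ≥ 0`. As `R_{xs}` is within `τ̇ν̇` of `ν̇ I`, pairing `h̃` with
`u'` gives `(1 - τ̇) ν̇ ‖u'‖² ≤ u'ᵀh̃ ≤ ‖u'‖ ‖h̃‖`, and `v' = h̃ - R_{xs} u'` gives
`‖v'‖ ≤ ‖h̃‖ + (1 + τ̇) ν̇ ‖u'‖`. The inverses make sense because every block of `T_x` and of
`X = mat(x)` is positive definite when `x ∈ int K`.
-/

open scoped RealInnerProductSpace ComplexOrder

section PerturbedIdentity

variable {E : Type*} [NormedAddCommGroup E] [InnerProductSpace ℝ E] {u v r : E} {ν τ : ℝ}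

lemma mul_norm_sq_le_inner_of_norm_sub_smul_le (hr : ‖r - ν • u‖ ≤ τ * ν * ‖u‖) :
    (1 - τ) * ν * ‖u‖ ^ 2 ≤ ⟪u, r⟫ := by
  have hsplit : ⟪u, r⟫ = ν * ‖u‖ ^ 2 + ⟪u, r - ν • u⟫ := by
    rw [inner_sub_right, inner_smul_right, real_inner_self_eq_norm_sq]; ring
  have hcs : -(‖u‖ * ‖r - ν • u‖) ≤ ⟪u, r - ν • u⟫ := neg_le_of_abs_le (abs_real_inner_le_norm _ _)
  nlinarith [mul_le_mul_of_nonneg_left hr (norm_nonneg u)]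

lemma norm_le_of_norm_sub_smul_le (hr : ‖r - ν • u‖ ≤ τ * ν * ‖u‖) (hν : 0 ≤ ν) :
    ‖r‖ ≤ (1 + τ) * ν * ‖u‖ :=
  calc ‖r‖ = ‖ν • u + (r - ν • u)‖ := by rw [add_sub_cancel]
    _ ≤ ν * ‖u‖ + τ * ν * ‖u‖ := by
      grw [norm_add_le, norm_smul, Real.norm_of_nonneg hν, hr]
    _ = (1 + τ) * ν * ‖u‖ := by ring

lemma norm_le_norm_add_div_of_inner_nonneg (hr : ‖r - ν • u‖ ≤ τ * ν * ‖u‖) (hν : 0 < ν)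
    (hτ : τ < 1) (huv : 0 ≤ ⟪u, v⟫) : ‖u‖ ≤ ‖r + v‖ / ((1 - τ) * ν) := by
  have hc : 0 < (1 - τ) * ν := mul_pos (sub_pos.2 hτ) hν
  rw [le_div_iff₀ hc]
  rcases (norm_nonneg u).eq_or_lt with hu | hu
  · rw [← hu, zero_mul]; exact norm_nonneg _
  refine le_of_mul_le_mul_left ?_ hu
  calc ‖u‖ * (‖u‖ * ((1 - τ) * ν)) = (1 - τ) * ν * ‖u‖ ^ 2 := by ring
    _ ≤ ⟪u, r⟫ + ⟪u, v⟫ := by linarith [mul_norm_sq_le_inner_of_norm_sub_smul_le hr]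
    _ = ⟪u, r + v⟫ := (inner_add_right _ _ _).symm
    _ ≤ ‖u‖ * ‖r + v‖ := real_inner_le_norm _ _

lemma norm_le_two_mul_norm_add_div_of_inner_nonneg (hr : ‖r - ν • u‖ ≤ τ * ν * ‖u‖)
    (hν : 0 < ν) (hτ₀ : 0 ≤ τ) (hτ₁ : τ < 1) (huv : 0 ≤ ⟪u, v⟫) :
    ‖v‖ ≤ 2 * ‖r + v‖ / (1 - τ) := by
  have hu := norm_le_norm_add_div_of_inner_nonneg hr hν hτ₁ huv
  have hτ' : 0 < 1 - τ := sub_pos.2 hτ₁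
  calc ‖v‖ = ‖(r + v) - r‖ := by rw [add_sub_cancel_left]
    _ ≤ ‖r + v‖ + (1 + τ) * ν * ‖u‖ := by
      grw [norm_sub_le, norm_le_of_norm_sub_smul_le hr hν.le]
    _ ≤ ‖r + v‖ + (1 + τ) * ν * (‖r + v‖ / ((1 - τ) * ν)) := by
      gcongr
    _ = 2 * ‖r + v‖ / (1 - τ) := by field_simp; ring

end PerturbedIdentity

namespace Matrix

variable {o : Type*} [Fintype o] [DecidableEq o] {p : o → Type*} [∀ i, Fintype (p i)]

lemma blockDiagonal'_mulVec_apply {R : Type*} [NonUnitalNonAssocSemiring R]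
    (M : ∀ i, Matrix (p i) (p i) R) (z : (Σ i, p i) → R) (i : o) (j : p i) :
    (blockDiagonal' M *ᵥ z) ⟨i, j⟩ = (M i *ᵥ fun j' => z ⟨i, j'⟩) j := by
  simp only [mulVec, dotProduct, Fintype.sum_sigma]
  rw [Fintype.sum_eq_single i fun i' hi' => Finset.sum_eq_zero fun j' _ => by
    rw [blockDiagonal'_apply_ne _ _ _ (Ne.symm hi'), zero_mul]]
  simp only [blockDiagonal'_apply_eq]

lemma PosDef.blockDiagonal' {𝕜 : Type*} [RCLike 𝕜] {M : ∀ i, Matrix (p i) (p i) 𝕜}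
    (hM : ∀ i, (M i).PosDef) : (Matrix.blockDiagonal' M).PosDef := by
  refine PosDef.of_dotProduct_mulVec_pos
    (isHermitian_blockDiagonal'_iff.2 fun i => (hM i).isHermitian) fun z hz => ?_
  have hsum : star z ⬝ᵥ (Matrix.blockDiagonal' M *ᵥ z) =
      ∑ i, star (fun j => z ⟨i, j⟩) ⬝ᵥ (M i *ᵥ fun j => z ⟨i, j⟩) := by
    simp only [dotProduct, Fintype.sum_sigma, blockDiagonal'_mulVec_apply, Pi.star_apply]
  obtain ⟨⟨i, j⟩, hij⟩ := Function.ne_iff.mp hz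
  have hzi : (fun j => z ⟨i, j⟩) ≠ 0 := Function.ne_iff.mpr ⟨j, hij⟩
  rw [hsum]
  exact Finset.sum_pos' (fun i _ => (hM i).posSemidef.dotProduct_mulVec_nonneg _)
    ⟨i, Finset.mem_univ _, (hM i).dotProduct_mulVec_pos hzi⟩

variable {n K : Type*} [Fintype n] [DecidableEq n] [CommRing K] {T X : Matrix n n K}

lemma mul_inv_mulVec_add_mulVec (hT : IsUnit T.det) (hX : IsUnit X.det) (S : Matrix n n K)
    (u v : n → K) :
    (T * X⁻¹) *ᵥ (S *ᵥ u + X *ᵥ v) = (T * X⁻¹ * S * T) *ᵥ (T⁻¹ *ᵥ u) + T *ᵥ v := by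
  simp only [mulVec_add, mulVec_mulVec, Matrix.mul_assoc, mul_nonsing_inv _ hT,
    nonsing_inv_mul _ hX, Matrix.mul_one]

lemma inv_mulVec_dotProduct_mulVec (hT : IsUnit T.det) (hsymm : Tᵀ = T) (u v : n → K) :
    (T⁻¹ *ᵥ u) ⬝ᵥ (T *ᵥ v) = u ⬝ᵥ v := by
  rw [dotProduct_mulVec, ← mulVec_transpose, hsymm, mulVec_mulVec, mul_nonsing_inv _ hT,
    one_mulVec]

end Matrix

section Quadratic

-- With `a = z₀`, `t = ⟨b̄, z̄⟩`, `c = ‖z̄‖²`, `W = ‖b̄‖²` and `β = β_b` these are the quadratic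
-- forms of `arrowBlk b` and `Tblk b` at `z = (z₀, z̄)`.

variable {b₀ β W a t c : ℝ}

lemma arrow_quadratic_form_pos (hb₀ : 0 < b₀) (hW : W < b₀ ^ 2) (ht : t ^ 2 ≤ W * c)
    (hc : 0 ≤ c) (hac : 0 < a ^ 2 + c) : 0 < b₀ * a ^ 2 + 2 * a * t + b₀ * c := by
  rcases hc.eq_or_lt with rfl | hc
  · obtain rfl : t = 0 := by nlinarith [sq_nonneg t]
    nlinarith
  · nlinarith [sq_nonneg (b₀ * a + t), mul_pos (sub_pos.2 hW) hc]

lemma T_quadratic_form_pos (hb₀ : 0 < b₀) (hβ : 0 < β) (hβW : β ^ 2 = b₀ ^ 2 - W)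
    (ht : t ^ 2 ≤ W * c) (hc : 0 ≤ c) (hac : 0 < a ^ 2 + c) :
    0 < b₀ * a ^ 2 + 2 * a * t + β * c + t ^ 2 / (β + b₀) := by
  rcases hc.eq_or_lt with rfl | hc
  · obtain rfl : t = 0 := by nlinarith [sq_nonneg t]
    simpa using mul_pos hb₀ (by simpa using hac)
  have hβb : 0 < β + b₀ := add_pos hβ hb₀
  have hscaled : b₀ * (β + b₀) ^ 2 * (b₀ * a ^ 2 + 2 * a * t + β * c + t ^ 2 / (β + b₀))
      = (β + b₀) ^ 2 * (b₀ * a + t) ^ 2 + (β + b₀) * β * ((β + b₀) * b₀ * c - t ^ 2) := by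
    field_simp
    ring
  refine pos_of_mul_pos_right ?_ (by positivity : 0 ≤ b₀ * (β + b₀) ^ 2)
  have hgap : β * (β + b₀) * c ≤ (β + b₀) * b₀ * c - t ^ 2 := by
    rw [show W = b₀ ^ 2 - β ^ 2 by linarith] at ht
    linarith
  rw [hscaled]
  nlinarith [sq_nonneg (b₀ * a + t), mul_pos (mul_pos hβb hβ) (mul_pos (mul_pos hβ hβb) hc),
    mul_le_mul_of_nonneg_left hgap (mul_pos hβb hβ).le]

end Quadratic

namespace SOCP

lemma vnorm_eq_norm {ι : Type*} [Fintype ι] (v : ι → ℝ) : vnorm v = ‖WithLp.toLp 2 v‖ := by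
  simp [vnorm, EuclideanSpace.norm_eq]

lemma dotV_eq_inner {ι : Type*} [Fintype ι] (u v : ι → ℝ) :
    dotV u v = ⟪WithLp.toLp 2 u, WithLp.toLp 2 v⟫ := by
  simp [dotV, PiLp.inner_apply, mul_comm]

lemma vnorm_mulVec_le {m n : Type*} [Fintype m] [Fintype n] [DecidableEq n]
    (M : Matrix m n ℝ) (v : n → ℝ) : vnorm (M *ᵥ v) ≤ op2 M * vnorm v := by
  simpa [vnorm_eq_norm, op2] using
    (LinearMap.toContinuousLinearMap (toEuclideanLin M)).le_opNorm (WithLp.toLp 2 v)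

lemma vnorm_nonneg {ι : Type*} [Fintype ι] (v : ι → ℝ) : 0 ≤ vnorm v := Real.sqrt_nonneg _

lemma vnorm_mulVec_sub_smul_le {ι : Type*} [Fintype ι] [DecidableEq ι] (M : Matrix ι ι ℝ)
    (ν : ℝ) (w : ι → ℝ) : vnorm (M *ᵥ w - ν • w) ≤ op2 (M - ν • 1) * vnorm w := by
  have h := vnorm_mulVec_le (M - ν • 1) w
  rwa [sub_mulVec, smul_mulVec, one_mulVec] at h

section Block

variable {m : ℕ} (b z : Fin (m + 1) → ℝ)

lemma arrowBlk_mulVec_zero :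
    (arrowBlk b *ᵥ z) 0 = b 0 * z 0 + ∑ j : Fin m, b j.succ * z j.succ := by
  simp [mulVec, dotProduct, arrowBlk, Fin.sum_univ_succ]

lemma arrowBlk_mulVec_succ (j : Fin m) :
    (arrowBlk b *ᵥ z) j.succ = b j.succ * z 0 + b 0 * z j.succ := by
  simp [mulVec, dotProduct, arrowBlk, Fin.sum_univ_succ, Fin.succ_ne_zero]

lemma Tblk_mulVec_zero : (Tblk b *ᵥ z) 0 = b 0 * z 0 + ∑ j : Fin m, b j.succ * z j.succ := by
  simp [mulVec, dotProduct, Tblk, Fin.sum_univ_succ]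

lemma Tblk_mulVec_succ (j : Fin m) : (Tblk b *ᵥ z) j.succ =
    b j.succ * z 0 + betaOf b * z j.succ
      + b j.succ * (∑ i : Fin m, b i.succ * z i.succ) / (betaOf b + b 0) := by
  simp only [mulVec, dotProduct, Tblk, of_apply, Fin.succ_ne_zero, ↓reduceIte, ite_mul, add_mul,
    zero_mul, Fin.sum_univ_succ, Fin.succ_inj, Finset.sum_add_distrib, Finset.sum_ite_eq,
    Finset.mem_univ, Finset.mul_sum, Finset.sum_div, add_assoc, add_right_inj]
  exact Finset.sum_congr rfl fun i _ => by ring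

lemma dotProduct_arrowBlk_mulVec :
    z ⬝ᵥ (arrowBlk b *ᵥ z) = b 0 * z 0 ^ 2 + 2 * z 0 * ∑ j : Fin m, b j.succ * z j.succ
      + b 0 * ∑ j : Fin m, z j.succ ^ 2 := by
  have htail : ∑ j : Fin m, z j.succ * (b j.succ * z 0 + b 0 * z j.succ)
      = z 0 * ∑ j : Fin m, b j.succ * z j.succ + b 0 * ∑ j : Fin m, z j.succ ^ 2 := by
    rw [Finset.mul_sum, Finset.mul_sum, ← Finset.sum_add_distrib]
    exact Finset.sum_congr rfl fun j _ => by ring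
  rw [dotProduct, Fin.sum_univ_succ, arrowBlk_mulVec_zero]
  simp only [arrowBlk_mulVec_succ, htail]
  ring

lemma dotProduct_Tblk_mulVec :
    z ⬝ᵥ (Tblk b *ᵥ z) = b 0 * z 0 ^ 2 + 2 * z 0 * ∑ j : Fin m, b j.succ * z j.succ
      + betaOf b * ∑ j : Fin m, z j.succ ^ 2
      + (∑ j : Fin m, b j.succ * z j.succ) ^ 2 / (betaOf b + b 0) := by
  have htail : ∀ t, ∑ j : Fin m, z j.succ * (b j.succ * z 0 + betaOf b * z j.succ
        + b j.succ * t / (betaOf b + b 0))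
      = z 0 * ∑ j : Fin m, b j.succ * z j.succ + betaOf b * ∑ j : Fin m, z j.succ ^ 2
        + t * (∑ j : Fin m, b j.succ * z j.succ) / (betaOf b + b 0) := by
    intro t
    rw [mul_div_assoc, Finset.sum_div, Finset.mul_sum, Finset.mul_sum, Finset.mul_sum,
      ← Finset.sum_add_distrib, ← Finset.sum_add_distrib]
    exact Finset.sum_congr rfl fun j _ => by ring
  rw [dotProduct, Fin.sum_univ_succ, Tblk_mulVec_zero]
  simp only [Tblk_mulVec_succ]
  rw [htail]
  ring

lemma arrowBlk_isHermitian : (arrowBlk b).IsHermitian := by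
  ext j j'
  by_cases h : j = 0 <;> by_cases h' : j' = 0 <;>
    simp [arrowBlk, h, h', eq_comm (a := j)]

lemma Tblk_isHermitian : (Tblk b).IsHermitian := by
  ext j j'
  by_cases h : j = 0 <;> by_cases h' : j' = 0 <;>
    simp [Tblk, h, h', eq_comm (a := j), mul_comm]

variable {b z}

lemma sq_add_tail_pos (hz : z ≠ 0) : 0 < z 0 ^ 2 + ∑ j : Fin m, z j.succ ^ 2 := by
  simpa [dotProduct, Fin.sum_univ_succ, sq] using dotProduct_star_self_pos_iff.2 hz

lemma tail_inner_sq_le :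
    (∑ j : Fin m, b j.succ * z j.succ) ^ 2 ≤ tailNormSq b * ∑ j : Fin m, z j.succ ^ 2 :=
  Finset.sum_mul_sq_le_sq_mul_sq _ _ _

lemma pos_of_tailNorm_lt_s6 (hb : tailNorm b < b 0) : 0 < b 0 :=
  (Real.sqrt_nonneg _).trans_lt hb

lemma tailNormSq_lt_sq_of_tailNorm_lt (hb : tailNorm b < b 0) : tailNormSq b < b 0 ^ 2 :=
  (Real.sqrt_lt' (pos_of_tailNorm_lt_s6 hb)).1 hb

lemma betaOf_pos_s6 (hb : tailNorm b < b 0) : 0 < betaOf b :=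
  Real.sqrt_pos.2 (sub_pos.2 (tailNormSq_lt_sq_of_tailNorm_lt hb))

lemma betaOf_sq (hb : tailNorm b < b 0) : betaOf b ^ 2 = b 0 ^ 2 - tailNormSq b :=
  Real.sq_sqrt (sub_pos.2 (tailNormSq_lt_sq_of_tailNorm_lt hb)).le

lemma arrowBlk_posDef (hb : tailNorm b < b 0) : (arrowBlk b).PosDef := by
  refine PosDef.of_dotProduct_mulVec_pos (arrowBlk_isHermitian b) fun z hz => ?_
  rw [star_trivial, dotProduct_arrowBlk_mulVec]
  exact arrow_quadratic_form_pos (pos_of_tailNorm_lt_s6 hb) (tailNormSq_lt_sq_of_tailNorm_lt hb)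
    tail_inner_sq_le (Finset.sum_nonneg fun _ _ => sq_nonneg _) (sq_add_tail_pos hz)

lemma Tblk_posDef (hb : tailNorm b < b 0) : (Tblk b).PosDef := by
  refine PosDef.of_dotProduct_mulVec_pos (Tblk_isHermitian b) fun z hz => ?_
  rw [star_trivial, dotProduct_Tblk_mulVec]
  exact T_quadratic_form_pos (pos_of_tailNorm_lt_s6 hb) (betaOf_pos_s6 hb) (betaOf_sq hb)
    tail_inner_sq_le (Finset.sum_nonneg fun _ _ => sq_nonneg _) (sq_add_tail_pos hz)

end Block

lemma TV_posDef {k : ℕ} {d : Fin k → ℕ} {x : Idx d → ℝ} (hx : inIntK x) : (TV x).PosDef :=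
  PosDef.blockDiagonal' fun i => Tblk_posDef (hx i)

lemma matV_posDef {k : ℕ} {d : Fin k → ℕ} {x : Idx d → ℝ} (hx : inIntK x) : (matV x).PosDef :=
  PosDef.blockDiagonal' fun i => arrowBlk_posDef (hx i)

theorem scaled_solution_bounds_general {k : ℕ} {d : Fin k → ℕ}
    (x s : Idx d → ℝ) (hx : inIntK x)
    (τ' ν' : ℝ) (hτ : τ' ∈ Set.Ioo (0 : ℝ) 1) (hν : 0 < ν')
    (hR : op2 (Rxs x s - ν' • (1 : Matrix (Idx d) (Idx d) ℝ)) ≤ τ' * ν')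
    (u v h : Idx d → ℝ)
    (huv : (matV s).mulVec u + (matV x).mulVec v = h) (hdot : 0 ≤ dotV u v) :
    vnorm ((TV x)⁻¹.mulVec u) ≤ vnorm ((TV x * (matV x)⁻¹).mulVec h) / ((1 - τ') * ν') ∧
    vnorm ((TV x).mulVec v) ≤ 2 * vnorm ((TV x * (matV x)⁻¹).mulVec h) / (1 - τ') := by
  have hT := (isUnit_iff_isUnit_det _).1 (TV_posDef hx).isUnit
  have hX := (isUnit_iff_isUnit_det _).1 (matV_posDef hx).isUnit
  have hTsymm : (TV x)ᵀ = TV x :=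
    (conjTranspose_eq_transpose_of_trivial _).symm.trans (TV_posDef hx).isHermitian
  set u' := (TV x)⁻¹ *ᵥ u
  set v' := TV x *ᵥ v
  have hh : (TV x * (matV x)⁻¹) *ᵥ h = Rxs x s *ᵥ u' + v' :=
    huv ▸ mul_inv_mulVec_add_mulVec hT hX (matV s) u v
  have hdot' : dotV u' v' = dotV u v := inv_mulVec_dotProduct_mulVec hT hTsymm u v
  have hinner : 0 ≤ ⟪WithLp.toLp 2 u', WithLp.toLp 2 v'⟫ := by
    rwa [← dotV_eq_inner, hdot']
  have hr : ‖WithLp.toLp 2 (Rxs x s *ᵥ u') - ν' • WithLp.toLp 2 u'‖ ≤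
      τ' * ν' * ‖WithLp.toLp 2 u'‖ := by
    rw [← WithLp.toLp_smul, ← WithLp.toLp_sub, ← vnorm_eq_norm, ← vnorm_eq_norm]
    exact (vnorm_mulVec_sub_smul_le _ _ _).trans
      (mul_le_mul_of_nonneg_right hR (vnorm_nonneg _))
  simp only [vnorm_eq_norm, hh, WithLp.toLp_add]
  exact ⟨norm_le_norm_add_div_of_inner_nonneg hr hν hτ.2 hinner,
    norm_le_two_mul_norm_add_div_of_inner_nonneg hr hν hτ.1.le hτ.2 hinner⟩

/-- Lemma 4: bounds on the scaled solutions of `S u + X v = h`. -/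
theorem scaled_solution_bounds {k : ℕ} {d : Fin k → ℕ}
    (x s : Idx d → ℝ) (hx : inIntK x) (hs : inIntK s)
    (τ' ν' : ℝ) (hτ : τ' ∈ Set.Ioo (0 : ℝ) 1) (hν : 0 < ν')
    (hR : op2 (Rxs x s - ν' • (1 : Matrix (Idx d) (Idx d) ℝ)) ≤ τ' * ν')
    (u v h : Idx d → ℝ)
    (huv : (matV s).mulVec u + (matV x).mulVec v = h) (hdot : 0 ≤ dotV u v) :
    vnorm ((TV x)⁻¹.mulVec u) ≤ vnorm ((TV x * (matV x)⁻¹).mulVec h) / ((1 - τ') * ν') ∧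
    vnorm ((TV x).mulVec v) ≤ 2 * vnorm ((TV x * (matV x)⁻¹).mulVec h) / (1 - τ') :=
  scaled_solution_bounds_general x s hx τ' ν' hτ hν hR u v h huv hdot

end SOCP
end
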